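/- arXiv:quant-ph/0110011 — 9 statements merged into one kernel-verified Lean document; each statement's English description precedes it below -/
import Mathlib

section
/- Let X, Y, G, H be finite sets with |X| = N, |Y| = K, |G| = L, |H| = W, where N ≥ 2. Suppose (g_y, h_y)_{y∈Y} is a scrambling permutation pair with parameters (N, K, W, L) and collision probability p. Then p = (L−1)/(N−1). -/
/-!
Double count the triples `(y, x₁, x₂)` with `h_y x₁ = h_y x₂`. Since `x ↦ (g_y x, h_y x)` is a
bijection onto `G × H`, every fibre of `h_y` has exactly `L` points, so each `y` contributes
`N * L` ordered pairs. Counting by pairs instead, the `N` diagonal pairs contribute `K` each and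
the `N (N - 1)` others `p K` each. Hence `N L K = N K + N (N - 1) p K`, i.e. `p = (L - 1)/(N - 1)`.
-/

open Finset

lemma card_filter_snd_eq_card_of_bijective {X G H : Type*} [Fintype X] [Fintype G]
    [DecidableEq H] {f : X → G × H} (hf : Function.Bijective f) (b : H) :
    #{x | (f x).2 = b} = Fintype.card G := by
  rw [card_equiv (Equiv.ofBijective f hf) (t := univ ×ˢ {b})
      (fun _ => by simp [Prod.ext_iff, eq_comm]), card_product, card_singleton, mul_one, card_univ]

lemma card_filter_apply_eq_apply_of_card_fiber {X H : Type*} [Fintype X] [DecidableEq H]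
    {f : X → H} {L : ℕ} (hL : ∀ b, #{x | f x = b} = L) :
    #{q : X × X | f q.1 = f q.2} = Fintype.card X * L := by
  have hrow : ∀ x, #{x' | f x = f x'} = L := fun x => by simpa only [eq_comm] using hL (f x)
  rw [card_filter, Fintype.sum_prod_type]
  simp only [← card_filter, hrow, sum_const, card_univ, smul_eq_mul]

lemma sum_sum_card_filter_apply_eq_apply_of_card_fiber {X Y H : Type*} [Fintype X] [Fintype Y]
    [DecidableEq H] {h : Y → X → H} {L : ℕ} (hL : ∀ y b, #{x | h y x = b} = L) :
    ∑ x₁, ∑ x₂, #{y | h y x₁ = h y x₂} = Fintype.card Y * (Fintype.card X * L) := by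
  rw [← Fintype.sum_prod_type' (fun x₁ x₂ => #{y | h y x₁ = h y x₂})]
  have hpairs := sum_card_bipartiteAbove_eq_sum_card_bipartiteBelow
    (s := (univ : Finset (X × X))) (t := univ) (r := fun q y => h y q.1 = h y q.2)
  simpa only [bipartiteAbove, bipartiteBelow, card_filter_apply_eq_apply_of_card_fiber (hL _),
    sum_const, card_univ, smul_eq_mul] using hpairs

lemma sum_card_filter_eq_of_card_filter_eq_of_ne {X Y R : Type*} [Fintype X] [Fintype Y] [Ring R]
    {r : X → X → Y → Prop} [∀ x₁ x₂ y, Decidable (r x₁ x₂ y)] (hdiag : ∀ x y, r x x y) {c : R}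
    (hoff : ∀ x₁ x₂, x₁ ≠ x₂ → (#{y | r x₁ x₂ y} : R) = c) (x₁ : X) :
    ∑ x₂, (#{y | r x₁ x₂ y} : R) = Fintype.card Y + (Fintype.card X - 1) * c := by
  classical
  rw [← add_sum_erase _ _ (mem_univ x₁),
    sum_congr rfl fun x₂ hx₂ => hoff x₁ x₂ (ne_of_mem_erase hx₂).symm, sum_const,
    nsmul_eq_mul, cast_card_erase_of_mem (mem_univ x₁), card_univ,
    filter_true_of_mem fun y _ => hdiag x₁ y, card_univ]

theorem scrambling_collision_probability_general
    {X Y G H : Type*} [Fintype X] [Fintype Y] [Nonempty Y] [Fintype G]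
    [DecidableEq H]
    {N K L : ℕ}
    (hX : Fintype.card X = N) (hY : Fintype.card Y = K)
    (hG : Fintype.card G = L)
    (hN : 2 ≤ N)
    (g : Y → X → G) (h : Y → X → H)
    (hbij : ∀ y : Y, Function.Bijective (fun x : X => (g y x, h y x)))
    (p : ℝ)
    (hcol : ∀ x₁ x₂ : X, x₁ ≠ x₂ →
      ((Finset.univ.filter (fun y : Y => h y x₁ = h y x₂)).card : ℝ) = p * K) :
    p = ((L : ℝ) - 1) / ((N : ℝ) - 1) := by
  have hfiber (y : Y) (b : H) : #{x | h y x = b} = L :=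
    hG ▸ card_filter_snd_eq_card_of_bijective (hbij y) b
  have hcount : (N : ℝ) * (K + (N - 1) * (p * K)) = K * (N * L) := by
    have hrow (x₁ : X) : ∑ x₂, (#{y | h y x₁ = h y x₂} : ℝ) = K + (N - 1) * (p * K) := by
      rw [sum_card_filter_eq_of_card_filter_eq_of_ne (fun _ _ => rfl) hcol, hX, hY]
    have htotal := sum_sum_card_filter_apply_eq_apply_of_card_fiber hfiber
    rw [hX, hY] at htotal
    calc (N : ℝ) * (K + (N - 1) * (p * K))
        = ∑ x₁, ∑ x₂, (#{y | h y x₁ = h y x₂} : ℝ) := by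
          simp only [hrow, sum_const, card_univ, hX, nsmul_eq_mul]
      _ = K * (N * L) := by exact_mod_cast htotal
  have hK : (K : ℝ) ≠ 0 := by rw [← hY]; exact_mod_cast Fintype.card_ne_zero
  have hN₀ : (N : ℝ) ≠ 0 := Nat.cast_ne_zero.mpr (by omega)
  have hN₁ : (N : ℝ) - 1 ≠ 0 := sub_ne_zero.mpr (by exact_mod_cast (by omega : N ≠ 1))
  rw [eq_div_iff hN₁]
  refine mul_left_cancel₀ (mul_ne_zero hK hN₀) ?_
  linear_combination hcount

/-- For a scrambling permutation pair with parameters (N, K, W, L)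
(with N ≥ 2), the collision probability p equals (L−1)/(N−1).
(Y is nonempty so that the uniform probability over y ∈ Y is well defined.) -/
theorem scrambling_collision_probability
    {X Y G H : Type*} [Fintype X] [Fintype Y] [Nonempty Y] [Fintype G] [Fintype H]
    [DecidableEq H]
    {N K L W : ℕ}
    (hX : Fintype.card X = N) (hY : Fintype.card Y = K)
    (hG : Fintype.card G = L) (hH : Fintype.card H = W)
    (hN : 2 ≤ N)
    (g : Y → X → G) (h : Y → X → H)
    (hbij : ∀ y : Y, Function.Bijective (fun x : X => (g y x, h y x)))
    (p : ℝ)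
    (hcol : ∀ x₁ x₂ : X, x₁ ≠ x₂ →
      ((Finset.univ.filter (fun y : Y => h y x₁ = h y x₂)).card : ℝ) = p * K) :
    p = ((L : ℝ) - 1) / ((N : ℝ) - 1) :=
  scrambling_collision_probability_general hX hY hG hN g h hbij p hcol
end

section
/- Let F be a finite field and let (x₀, x₁) and (x₀', x₁') be two distinct pairs in F × F. Say that an element y of the disjoint union F ∪ {⊥} 'collides' if either y = c for some c ∈ F and x₀·c + x₁ = x₀'·c + x₁', or y = ⊥ and x₀ = x₀'. Then exactly one element of F ∪ {⊥} collides; i.e., the set of colliding y has cardinality 1. -/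
/-- For the linear-function scrambling permutation over a finite field F,
any two distinct pairs (x₀, x₁) ≠ (x₀', x₁') collide under exactly one
y ∈ F ∪ {⊥} (here ⊥ is encoded as `none : Option F`). -/
theorem linear_function_scrambling_unique_collision
    {F : Type*} [Field F] [Fintype F]
    (x₀ x₁ x₀' x₁' : F) (hx : (x₀, x₁) ≠ (x₀', x₁')) :
    Nat.card {y : Option F //
      y.elim (x₀ = x₀') (fun c => x₀ * c + x₁ = x₀' * c + x₁')} = 1 := by
  have hex : ∃! y : Option F,
      y.elim (x₀ = x₀') (fun c => x₀ * c + x₁ = x₀' * c + x₁') := by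
    by_cases h : x₀ = x₀'
    · have hx1 : x₁ ≠ x₁' := fun h1 => hx (by rw [h, h1])
      refine ⟨none, h, ?_⟩
      rintro (_ | c) hy
      · rfl
      · exfalso
        simp only [Option.elim, h] at hy
        exact hx1 (by linear_combination hy)
    · have hsub : x₀ - x₀' ≠ 0 := sub_ne_zero.mpr h
      refine ⟨some ((x₁' - x₁) / (x₀ - x₀')), ?_, ?_⟩
      · simp only [Option.elim]
        field_simp
        ring
      · rintro (_ | c) hy
        · exact absurd hy h
        · simp only [Option.elim] at hy
          have hc : (x₀ - x₀') * c = x₁' - x₁ := by linear_combination hy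
          congr 1
          field_simp
          linear_combination hc
  obtain ⟨y, hy, huniq⟩ := hex
  rw [Nat.card_eq_one_iff_unique]
  exact ⟨⟨fun a b => Subtype.ext ((huniq a a.2).trans (huniq b b.2).symm)⟩, ⟨y, hy⟩⟩
end

section
/- Let F be a finite field, let d ≥ 1 be an integer, and let x, x' : {0,…,d−1} → F be two distinct d-tuples. For an integer k with 0 ≤ k < d and a tuple c : {0,…,k−1} → F, say that the pair (k, c) 'collides' if x_i + x_k·c_i = x'_i + x'_k·c_i for all i < k, and x_i = x'_i for all i with k < i < d. Then there is exactly one pair (k, c) (with 0 ≤ k < d and c : {0,…,k−1} → F) that collides. -/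
/-- Scrambling property of the extended linear function construction:
for two distinct d-tuples x, x' over a finite field F there is exactly one pair
(k, c) with 0 ≤ k < d and c : Fin k → F such that
x_i + x_k·c_i = x'_i + x'_k·c_i for all i < k and x_i = x'_i for all k < i < d. -/
theorem extended_linear_scrambling_unique_collision
    {F : Type*} [Field F] [Fintype F] {d : ℕ} (hd : 1 ≤ d)
    (x x' : Fin d → F) (hxx : x ≠ x') :
    ∃! q : Σ k : Fin d, Fin k.val → F,
      (∀ i : Fin q.1.val,
          x ⟨i.val, i.isLt.trans q.1.isLt⟩ + x q.1 * q.2 i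
            = x' ⟨i.val, i.isLt.trans q.1.isLt⟩ + x' q.1 * q.2 i) ∧
      (∀ i : Fin d, q.1.val < i.val → x i = x' i) := by
  classical
  have hne : ∃ i, x i ≠ x' i := by
    by_contra h; push_neg at h; exact hxx (funext h)
  set S : Finset (Fin d) := Finset.univ.filter (fun i => x i ≠ x' i) with hS
  have hSne : S.Nonempty := by
    obtain ⟨i, hi⟩ := hne
    exact ⟨i, by simp [hS, hi]⟩
  set k := S.max' hSne with hk
  have hkmem : k ∈ S := S.max'_mem hSne
  have hkne : x k ≠ x' k := by simpa [hS] using hkmem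
  have hmax : ∀ i : Fin d, k.val < i.val → x i = x' i := by
    intro i hi
    by_contra h
    have hmem : i ∈ S := by simp [hS, h]
    have hle := Fin.le_def.mp (S.le_max' i hmem)
    omega
  have hsub : x k - x' k ≠ 0 := sub_ne_zero.mpr hkne
  refine ⟨⟨k, fun i =>
      (x' ⟨i.val, i.isLt.trans k.isLt⟩ - x ⟨i.val, i.isLt.trans k.isLt⟩) / (x k - x' k)⟩,
    ⟨?_, ?_⟩, ?_⟩
  · intro i
    field_simp
    ring
  · exact hmax
  · rintro ⟨k', c'⟩ ⟨h1, h2⟩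
    have hk'k : k' = k := by
      rcases lt_trichotomy k'.val k.val with h | h | h
      · exact absurd (h2 k h) hkne
      · exact Fin.ext h
      · have hkk' : x k' = x' k' := hmax k' h
        have h3 := h1 ⟨k.val, h⟩
        simp only [Fin.eta, hkk'] at h3
        exact absurd (add_right_cancel h3) hkne
    subst hk'k
    have hc : c' = fun i =>
        (x' ⟨i.val, i.isLt.trans k.isLt⟩ - x ⟨i.val, i.isLt.trans k.isLt⟩) / (x k - x' k) := by
      funext i
      have h3 := h1 i
      field_simp
      linear_combination h3
    subst hc
    rfl
end

section
/- Let E be a complex inner product space and let A, B, C be unit vectors in E. Let ε and δ be real numbers with 0 ≤ ε ≤ 1/2 and 0 ≤ δ ≤ 1/2, and suppose |⟨A, B⟩|² = 1 − ε and |⟨A, C⟩|² = 1 − δ. Then |⟨B, C⟩|² ≥ 1 − 2(ε + δ). -/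
/-!
Write `B = ⟪A, B⟫ • A + B'` and `C = ⟪A, C⟫ • A + C'` with `B', C'` orthogonal to `A`. Then
`⟪B, C⟫ = conj ⟪A, B⟫ * ⟪A, C⟫ + ⟪B', C'⟫` with `‖B'‖² = ε` and `‖C'‖² = δ`, so Cauchy–Schwarz gives
`|⟪B, C⟫| ≥ cos α cos β - sin α sin β = cos (α + β)` where `sin² α = ε` and `sin² β = δ`.
Squaring, `cos² (α + β) ≥ 1 - 2 (sin² α + sin² β)` whenever the right side is positive.
-/

open scoped InnerProductSpace

theorem one_sub_two_mul_sq_add_sq_le_sq {p q r s t : ℝ} (hp : 0 ≤ p) (hq : 0 ≤ q)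
    (hpr : p ^ 2 + r ^ 2 = 1) (hqs : q ^ 2 + s ^ 2 = 1) (ht : p * q - r * s ≤ t) :
    1 - 2 * (r ^ 2 + s ^ 2) ≤ t ^ 2 := by
  rcases le_or_gt (1 - 2 * (r ^ 2 + s ^ 2)) 0 with hneg | hpos
  · exact hneg.trans (sq_nonneg t)
  have hpq : p * q ≤ 1 := by nlinarith [sq_nonneg (p - q)]
  have hrs : r * s ≤ p * q := by
    refine abs_le_of_sq_le_sq' ?_ (mul_nonneg hp hq) |>.2
    nlinarith
  have hcross : 2 * (p * q) * (r * s) ≤ r ^ 2 + s ^ 2 := by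
    nlinarith [sq_nonneg (r - s), mul_nonneg hp hq]
  nlinarith [sub_nonneg.2 hrs]

section UnitVector

variable {𝕜 E : Type*} [RCLike 𝕜] [NormedAddCommGroup E] [InnerProductSpace 𝕜 E] {A : E}

theorem inner_sub_inner_smul_self_right (hA : ‖A‖ = 1) (B : E) :
    ⟪A, B - ⟪A, B⟫_𝕜 • A⟫_𝕜 = 0 := by
  simp [inner_sub_right, inner_smul_right, inner_self_eq_norm_sq_to_K, hA]

theorem norm_inner_sq_add_norm_sub_inner_smul_sq (hA : ‖A‖ = 1) (B : E) :
    ‖⟪A, B⟫_𝕜‖ ^ 2 + ‖B - ⟪A, B⟫_𝕜 • A‖ ^ 2 = ‖B‖ ^ 2 := by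
  have horth : ⟪⟪A, B⟫_𝕜 • A, B - ⟪A, B⟫_𝕜 • A⟫_𝕜 = 0 := by
    rw [inner_smul_left, inner_sub_inner_smul_self_right hA, mul_zero]
  have h := norm_add_sq_eq_norm_sq_add_norm_sq_of_inner_eq_zero _ _ horth
  rw [add_sub_cancel, norm_smul, hA, mul_one] at h
  simpa only [sq] using h.symm

theorem inner_eq_conj_mul_add_inner_sub (hA : ‖A‖ = 1) (B C : E) :
    ⟪B, C⟫_𝕜 = starRingEnd 𝕜 ⟪A, B⟫_𝕜 * ⟪A, C⟫_𝕜
      + ⟪B - ⟪A, B⟫_𝕜 • A, C - ⟪A, C⟫_𝕜 • A⟫_𝕜 := by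
  have hAA : ⟪A, A⟫_𝕜 = 1 := by simp [inner_self_eq_norm_sq_to_K, hA]
  simp only [inner_sub_left, inner_sub_right, inner_smul_left, inner_smul_right, hAA,
    ← inner_conj_symm A B, RCLike.conj_conj]
  ring

theorem norm_inner_mul_norm_inner_sub_le (hA : ‖A‖ = 1) (B C : E) :
    ‖⟪A, B⟫_𝕜‖ * ‖⟪A, C⟫_𝕜‖ - ‖B - ⟪A, B⟫_𝕜 • A‖ * ‖C - ⟪A, C⟫_𝕜 • A‖ ≤ ‖⟪B, C⟫_𝕜‖ := by
  rw [inner_eq_conj_mul_add_inner_sub hA B C]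
  calc ‖⟪A, B⟫_𝕜‖ * ‖⟪A, C⟫_𝕜‖ - ‖B - ⟪A, B⟫_𝕜 • A‖ * ‖C - ⟪A, C⟫_𝕜 • A‖
      ≤ ‖starRingEnd 𝕜 ⟪A, B⟫_𝕜 * ⟪A, C⟫_𝕜‖ - ‖⟪B - ⟪A, B⟫_𝕜 • A, C - ⟪A, C⟫_𝕜 • A⟫_𝕜‖ := by
        rw [norm_mul, RCLike.norm_conj]
        gcongr
        exact norm_inner_le_norm _ _
    _ ≤ _ := norm_sub_le_norm_add _ _

end UnitVector

theorem fidelity_triangle_inequality_general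
    {E : Type*} [NormedAddCommGroup E] [InnerProductSpace ℂ E]
    (A B C : E) (hA : ‖A‖ = 1) (hB : ‖B‖ = 1) (hC : ‖C‖ = 1)
    (ε δ : ℝ)
    (hAB : ‖(inner ℂ A B : ℂ)‖ ^ 2 = 1 - ε)
    (hAC : ‖(inner ℂ A C : ℂ)‖ ^ 2 = 1 - δ) :
    ‖(inner ℂ B C : ℂ)‖ ^ 2 ≥ 1 - 2 * (ε + δ) := by
  have hB' := norm_inner_sq_add_norm_sub_inner_smul_sq (𝕜 := ℂ) hA B
  have hC' := norm_inner_sq_add_norm_sub_inner_smul_sq (𝕜 := ℂ) hA C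
  rw [hB, one_pow] at hB'
  rw [hC, one_pow] at hC'
  have key := one_sub_two_mul_sq_add_sq_le_sq (norm_nonneg _) (norm_nonneg _) hB' hC'
    (norm_inner_mul_norm_inner_sub_le hA B C)
  linarith

/-- Triangle inequality for fidelity of pure states: if A, B, C are
unit vectors with |⟨A,B⟩|² = 1 − ε and |⟨A,C⟩|² = 1 − δ (ε, δ ∈ [0, 1/2]),
then |⟨B,C⟩|² ≥ 1 − 2(ε + δ). -/
theorem fidelity_triangle_inequality
    {E : Type*} [NormedAddCommGroup E] [InnerProductSpace ℂ E]
    (A B C : E) (hA : ‖A‖ = 1) (hB : ‖B‖ = 1) (hC : ‖C‖ = 1)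
    (ε δ : ℝ) (hε0 : 0 ≤ ε) (hε : ε ≤ 1 / 2) (hδ0 : 0 ≤ δ) (hδ : δ ≤ 1 / 2)
    (hAB : ‖(inner ℂ A B : ℂ)‖ ^ 2 = 1 - ε)
    (hAC : ‖(inner ℂ A C : ℂ)‖ ^ 2 = 1 - δ) :
    ‖(inner ℂ B C : ℂ)‖ ^ 2 ≥ 1 - 2 * (ε + δ) :=
  fidelity_triangle_inequality_general A B C hA hB hC ε δ hAB hAC
end

section
/- For all real numbers ε and δ with 0 ≤ ε ≤ 1/2 and 0 ≤ δ ≤ 1/2, one has √((1−ε)(1−δ)) − √(ε·δ) ≥ √(1 − 2(ε+δ)), where √ denotes the real square root (which is 0 on negative arguments). -/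
/-- For 0 ≤ ε ≤ 1/2 and 0 ≤ δ ≤ 1/2,
√((1−ε)(1−δ)) − √(εδ) ≥ √(1 − 2(ε+δ)). -/
theorem sqrt_fidelity_algebraic_step
    (ε δ : ℝ) (hε0 : 0 ≤ ε) (hε : ε ≤ 1 / 2) (hδ0 : 0 ≤ δ) (hδ : δ ≤ 1 / 2) :
    Real.sqrt ((1 - ε) * (1 - δ)) - Real.sqrt (ε * δ)
      ≥ Real.sqrt (1 - 2 * (ε + δ)) := by
  have h1 : (0:ℝ) ≤ (1-ε)*(1-δ) := by nlinarith
  have h2 : (0:ℝ) ≤ ε*δ := mul_nonneg hε0 hδ0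
  set a := Real.sqrt ((1-ε)*(1-δ)) with ha
  set b := Real.sqrt (ε*δ) with hb
  have ha0 : 0 ≤ a := Real.sqrt_nonneg _
  have hb0 : 0 ≤ b := Real.sqrt_nonneg _
  have ha2 : a^2 = (1-ε)*(1-δ) := Real.sq_sqrt h1
  have hb2 : b^2 = ε*δ := Real.sq_sqrt h2
  have hab : b ≤ a := by
    rw [ha, hb]; exact Real.sqrt_le_sqrt (by nlinarith)
  have hba : 2*(a*b) ≤ ε + δ := by
    have h3 : a*b = Real.sqrt ((1-ε)*(1-δ)*(ε*δ)) := (Real.sqrt_mul h1 _).symm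
    have h4 : Real.sqrt ((1-ε)*(1-δ)*(ε*δ)) ≤ Real.sqrt (((ε+δ)/2)^2) :=
      Real.sqrt_le_sqrt (by nlinarith [sq_nonneg (ε-δ), mul_nonneg h2 (mul_nonneg hε0 hδ0)])
    rw [Real.sqrt_sq (by linarith)] at h4
    rw [h3]; linarith
  calc Real.sqrt (1 - 2*(ε+δ)) ≤ Real.sqrt ((a-b)^2) :=
        Real.sqrt_le_sqrt (by nlinarith)
    _ = a - b := Real.sqrt_sq (by linarith)
end

section
/- Let X and H be finite sets, let Y be a finite set of cardinality K ≥ 1, and let h : Y → X → H be a family of functions such that, for some real number p, for all x₁ ≠ x₂ in X the number of y ∈ Y with h_y(x₁) = h_y(x₂) equals p·K. Let α : X → ℂ satisfy Σ_{x∈X} |α_x|² = 1 and set D = Σ_{x∈X} α_x. Then Σ_{y∈Y} Σ_{u∈H} |Σ_{x : h_y(x) = u} α_x|² = K·(1 + p·(|D|² − 1)). -/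
/-! Expanding `‖∑_{h_y x = u} α x‖²` as a double sum of `Re (α x₁ * conj (α x₂))` over pairs in
one fiber, and summing over `u` and `y`, weights each pair by its collision count: `K` on the
diagonal, `p K` off it. Hence the total is `p K ‖D‖² + (K - p K) ∑ ‖α x‖²`. -/

open Finset ComplexConjugate

theorem Complex.norm_sum_sq_eq_sum_sum_re_mul_conj {ι : Type*} (s : Finset ι) (f : ι → ℂ) :
    ‖∑ i ∈ s, f i‖ ^ 2 = ∑ i ∈ s, ∑ j ∈ s, (f i * conj (f j)).re := by
  rw [← Complex.normSq_eq_norm_sq, ← Complex.ofReal_re (Complex.normSq _), ← Complex.mul_conj,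
    map_sum, sum_mul_sum]
  simp only [Complex.re_sum]

theorem sum_norm_sum_fiber_sq {ι κ : Type*} [Fintype ι] [Fintype κ] [DecidableEq κ]
    (g : ι → κ) (f : ι → ℂ) :
    ∑ u, ‖∑ i ∈ univ.filter (fun i => g i = u), f i‖ ^ 2
      = ∑ i, ∑ j, if g i = g j then (f i * conj (f j)).re else 0 := by
  simp only [Complex.norm_sum_sq_eq_sum_sum_re_mul_conj]
  rw [← sum_fiberwise univ g]
  refine sum_congr rfl fun u _ => sum_congr rfl fun i hi => ?_
  rw [(mem_filter.mp hi).2.symm, sum_filter]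
  exact sum_congr rfl fun j _ => if_congr eq_comm rfl rfl

theorem sum_sum_sum_ite_eq_sum_sum_card_mul {ι Y κ R : Type*} [Fintype ι] [Fintype Y]
    [DecidableEq κ] [NonAssocSemiring R] (h : Y → ι → κ) (t : ι → ι → R) :
    ∑ y, ∑ i, ∑ j, (if h y i = h y j then t i j else 0)
      = ∑ i, ∑ j, ((univ.filter fun y => h y i = h y j).card : R) * t i j := by
  rw [sum_comm]
  refine sum_congr rfl fun i _ => ?_
  rw [sum_comm]
  refine sum_congr rfl fun j _ => ?_
  rw [← sum_filter, sum_const, nsmul_eq_mul]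

theorem sum_sum_mul_eq_of_offDiag_const {ι R : Type*} [Fintype ι] [DecidableEq ι] [CommRing R]
    (c t : ι → ι → R) (a b : R) (hc : ∀ i j, i ≠ j → c i j = a) (hc_diag : ∀ i, c i i = b) :
    ∑ i, ∑ j, c i j * t i j = a * ∑ i, ∑ j, t i j + (b - a) * ∑ i, t i i := by
  have off_diag : ∀ i, ∑ j, (c i j - a) * t i j = (b - a) * t i i := fun i => by
    rw [← hc_diag i]
    exact sum_eq_single i (fun j _ hji => by rw [hc i j hji.symm, sub_self, zero_mul])
      (fun hi => absurd (mem_univ i) hi)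
  simp only [mul_sum, ← off_diag, ← sum_add_distrib, sub_mul, add_sub_cancel]

theorem simple_scrambling_normalization_general
    {X Y H : Type*} [Fintype X] [Fintype Y] [Fintype H] [DecidableEq H]
    {K : ℕ} (hY : Fintype.card Y = K)
    (h : Y → X → H) (p : ℝ)
    (hcol : ∀ x₁ x₂ : X, x₁ ≠ x₂ →
      ((Finset.univ.filter (fun y : Y => h y x₁ = h y x₂)).card : ℝ) = p * K)
    (α : X → ℂ) (hα : ∑ x : X, ‖α x‖ ^ 2 = 1)
    (D : ℂ) (hD : D = ∑ x : X, α x) :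
    ∑ y : Y, ∑ u : H,
        ‖∑ x ∈ Finset.univ.filter (fun x : X => h y x = u), α x‖ ^ 2
      = K * (1 + p * (‖D‖ ^ 2 - 1)) := by
  classical
  have hdiag : ∀ x, ((univ.filter fun y => h y x = h y x).card : ℝ) = K := fun x => by
    rw [filter_true_of_mem fun _ _ => rfl, card_univ, hY]
  have hnorm : ∀ x, (α x * conj (α x)).re = ‖α x‖ ^ 2 := fun x => by
    rw [Complex.mul_conj', ← Complex.ofReal_pow, Complex.ofReal_re]
  simp only [sum_norm_sum_fiber_sq]
  rw [sum_sum_sum_ite_eq_sum_sum_card_mul, sum_sum_mul_eq_of_offDiag_const _ _ _ _ hcol hdiag,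
    ← Complex.norm_sum_sq_eq_sum_sum_re_mul_conj, ← hD]
  simp only [hnorm, hα]
  ring

/-- Central computation of the Simple Scrambling protocol: if every
pair x₁ ≠ x₂ collides under exactly p·K of the K hash functions h_y, and
Σ_x |α_x|² = 1, D = Σ_x α_x, then
Σ_y Σ_u |Σ_{x : h_y(x)=u} α_x|² = K·(1 + p·(|D|² − 1)). -/
theorem simple_scrambling_normalization
    {X Y H : Type*} [Fintype X] [Fintype Y] [Fintype H] [DecidableEq H]
    {K : ℕ} (hK : 1 ≤ K) (hY : Fintype.card Y = K)
    (h : Y → X → H) (p : ℝ)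
    (hcol : ∀ x₁ x₂ : X, x₁ ≠ x₂ →
      ((Finset.univ.filter (fun y : Y => h y x₁ = h y x₂)).card : ℝ) = p * K)
    (α : X → ℂ) (hα : ∑ x : X, ‖α x‖ ^ 2 = 1)
    (D : ℂ) (hD : D = ∑ x : X, α x) :
    ∑ y : Y, ∑ u : H,
        ‖∑ x ∈ Finset.univ.filter (fun x : X => h y x = u), α x‖ ^ 2
      = K * (1 + p * (‖D‖ ^ 2 - 1)) :=
  simple_scrambling_normalization_general hY h p hcol α hα D hD
end

section
/- Let W and L be positive integers, let N = W·L, and assume N ≥ 2. Then for every real ε with 0 ≤ ε < 1/2, (1 − ε) / (1 − ε·N·(L−1)/(L·(N−1))) ≥ 1 − 2·W·ε/N. -/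
/-!
Writing `a = N(L-1)/(L(N-1))` and `c = 2W/N = 2/L`, clearing the denominator `1 - aε > 0` turns the
claim into `ε (a + c - 1 - acε) ≥ 0`. Since `ε < 1/2` and `a ≥ 0`, it suffices that
`a + c - 1 ≥ ac/2`, i.e. `a(L-1) ≥ L-2`, which reduces to `(L-1)² + N - 1 ≥ 0`.
-/

theorem one_sub_mul_le_div_one_sub_mul {a c ε : ℝ} (hε : 0 ≤ ε) (haε : a * ε < 1)
    (h : a * c * ε ≤ a + c - 1) : 1 - c * ε ≤ (1 - ε) / (1 - a * ε) := by
  rw [le_div_iff₀ (by linarith)]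
  nlinarith [mul_le_mul_of_nonneg_left h hε]

section ScramblingCoefficient

variable {n l : ℝ}

theorem scrambling_coeff_nonneg (hl : 1 ≤ l) (hn : 1 < n) : 0 ≤ n * (l - 1) / (l * (n - 1)) :=
  div_nonneg (mul_nonneg (by linarith) (by linarith)) (mul_nonneg (by linarith) (by linarith))

theorem scrambling_coeff_le_one (hl : 0 < l) (hln : l ≤ n) (hn : 1 < n) :
    n * (l - 1) / (l * (n - 1)) ≤ 1 :=
  div_le_one_of_le₀ (by nlinarith) (mul_nonneg hl.le (by linarith))

theorem sub_two_le_scrambling_coeff_mul (hl : 0 < l) (hn : 1 < n) :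
    l - 2 ≤ n * (l - 1) / (l * (n - 1)) * (l - 1) := by
  rw [div_mul_eq_mul_div, le_div_iff₀ (mul_pos hl (by linarith))]
  nlinarith [sq_nonneg (l - 1)]

theorem one_sub_two_div_mul_le_div_one_sub_scrambling_coeff_mul {ε : ℝ} (hl : 1 ≤ l) (hln : l ≤ n) (hn : 1 < n)
    (hε0 : 0 ≤ ε) (hε : ε < 1 / 2) :
    1 - 2 / l * ε ≤ (1 - ε) / (1 - n * (l - 1) / (l * (n - 1)) * ε) := by
  set a := n * (l - 1) / (l * (n - 1))
  have hl0 : 0 < l := by linarith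
  have ha0 : 0 ≤ a := scrambling_coeff_nonneg hl hn
  have ha1 : a ≤ 1 := scrambling_coeff_le_one hl0 hln hn
  have hac : 0 ≤ a * (2 / l) := mul_nonneg ha0 (by positivity)
  apply one_sub_mul_le_div_one_sub_mul hε0 (by nlinarith)
  calc a * (2 / l) * ε ≤ a * (2 / l) * (1 / 2) := mul_le_mul_of_nonneg_left hε.le hac
    _ = a / l := by ring
    _ ≤ a + 2 / l - 1 := by
      rw [div_le_iff₀ hl0, sub_mul, add_mul, div_mul_cancel₀ _ hl0.ne']
      linarith [sub_two_le_scrambling_coeff_mul hl0 hn]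

end ScramblingCoefficient

theorem simple_scrambling_fidelity_bound_general
    (W L N : ℕ) (hN : N = W * L) (hN2 : 2 ≤ N)
    (ε : ℝ) (hε0 : 0 ≤ ε) (hε : ε < 1 / 2) :
    (1 - ε) / (1 - ε * N * ((L : ℝ) - 1) / (L * ((N : ℝ) - 1)))
      ≥ 1 - 2 * W * ε / N := by
  have hW : 0 < W := Nat.pos_of_mul_pos_right (hN ▸ (by omega : 0 < N))
  have hL : 0 < L := Nat.pos_of_mul_pos_left (hN ▸ (by omega : 0 < N))
  have hLN : L ≤ N := hN ▸ Nat.le_mul_of_pos_left L hW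
  have hW' : (W : ℝ) ≠ 0 := by positivity
  have hL' : (L : ℝ) ≠ 0 := by positivity
  have bound := one_sub_two_div_mul_le_div_one_sub_scrambling_coeff_mul (n := N) (l := L) (ε := ε)
    (by exact_mod_cast hL) (by exact_mod_cast hLN) (by exact_mod_cast hN2) hε0 hε
  rw [hN] at bound ⊢
  push_cast at bound ⊢
  convert bound using 2
  · ring
  · field_simp

/-- Fidelity bound in the Simple Scrambling protocol: for positive
integers W, L with N = W·L ≥ 2 and real 0 ≤ ε < 1/2,
(1 − ε)/(1 − ε·N(L−1)/(L(N−1))) ≥ 1 − 2Wε/N. -/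
theorem simple_scrambling_fidelity_bound
    (W L N : ℕ) (hW : 0 < W) (hL : 0 < L) (hN : N = W * L) (hN2 : 2 ≤ N)
    (ε : ℝ) (hε0 : 0 ≤ ε) (hε : ε < 1 / 2) :
    (1 - ε) / (1 - ε * N * ((L : ℝ) - 1) / (L * ((N : ℝ) - 1)))
      ≥ 1 - 2 * W * ε / N :=
  simple_scrambling_fidelity_bound_general W L N hN hN2 ε hε0 hε
end

section
/- Let N ≥ 2 and let α : Fin N → ℂ satisfy Σ_i |α_i|² = 1. Define the N×N complex matrix ρ = (1/N!) · Σ_{σ ∈ S_N} v_σ v_σ*, where for each permutation σ of {0,…,N−1} the column vector v_σ has entries (v_σ)_i = α_{σ⁻¹(i)}, and v_σ* is its conjugate transpose. Then: (i) ρ_{ii} = 1/N for every i; and (ii) for all i ≠ j, ρ_{ij} = (1/(N(N−1))) · Σ_{k ≠ l} α_k · conj(α_l); in particular all off-diagonal entries of ρ are equal to a common real number a. -/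
/-!
Relabelling by a fixed permutation shows that `∑ σ, f (σ i)` does not depend on `i`, and since
`S_N` acts 2-transitively, `∑ σ, f (σ i) (σ j)` does not depend on the pair `i ≠ j`. Summing over
all `i` (resp. all pairs `i ≠ j`) and exchanging the sums gives
`N • ∑ σ, f (σ i) = N! • ∑ k, f k` and `N (N - 1) • ∑ σ, f (σ i) (σ j) = N! • ∑_{k ≠ l} f k l`.
The off-diagonal sum `∑_{k ≠ l} α k * conj (α l) = |∑ k, α k|² - ∑ k, |α k|²` is real.
-/

open Equiv Finset Nat ComplexConjugate

namespace Equiv.Perm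

variable {α M : Type*} [Fintype α] [DecidableEq α] [AddCommMonoid M]

theorem sum_comp_apply_eq (f : α → M) (i i' : α) :
    ∑ σ : Perm α, f (σ i) = ∑ σ : Perm α, f (σ i') := by
  obtain ⟨π, hπ⟩ := MulAction.exists_smul_eq (Perm α) i' i
  exact Fintype.sum_equiv (Equiv.mulRight π) _ _ fun σ => by simp [← hπ]

theorem sum_comp_apply_apply_eq (f : α → α → M) {i j i' j' : α} (hij : i ≠ j)
    (hij' : i' ≠ j') :
    ∑ σ : Perm α, f (σ i) (σ j) = ∑ σ : Perm α, f (σ i') (σ j') := by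
  obtain ⟨π, hπi, hπj⟩ :=
    MulAction.is_two_pretransitive_iff.mp (isMultiplyPretransitive α 2) hij' hij
  exact Fintype.sum_equiv (Equiv.mulRight π) _ _ fun σ => by simp [← hπi, ← hπj]

theorem sum_sum_erase_comp_apply_apply (f : α → α → M) (σ : Perm α) :
    ∑ i, ∑ j ∈ univ.erase i, f (σ i) (σ j) = ∑ k, ∑ l ∈ univ.erase k, f k l := by
  rw [← Equiv.sum_comp σ (fun k => ∑ l ∈ univ.erase k, f k l)]
  exact sum_congr rfl fun i _ => sum_equiv σ (by simp) (by simp)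

theorem card_smul_sum_comp_apply (f : α → M) (i : α) :
    Fintype.card α • ∑ σ : Perm α, f (σ i) = (Fintype.card α)! • ∑ k, f k := by
  calc Fintype.card α • ∑ σ : Perm α, f (σ i)
      = ∑ i' : α, ∑ σ : Perm α, f (σ i') := by simp [sum_comp_apply_eq f _ i]
    _ = ∑ σ : Perm α, ∑ i', f (σ i') := sum_comm
    _ = (Fintype.card α)! • ∑ k, f k := by simp [Equiv.sum_comp, Fintype.card_perm]

theorem card_mul_pred_smul_sum_comp_apply_apply (f : α → α → M) {i j : α} (hij : i ≠ j) :
    (Fintype.card α * (Fintype.card α - 1)) • ∑ σ : Perm α, f (σ i) (σ j) =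
      (Fintype.card α)! • ∑ k, ∑ l ∈ univ.erase k, f k l := by
  calc (Fintype.card α * (Fintype.card α - 1)) • ∑ σ : Perm α, f (σ i) (σ j)
      = ∑ i', ∑ j' ∈ univ.erase i', ∑ σ : Perm α, f (σ i') (σ j') := by
        have h : ∀ i', ∀ j' ∈ univ.erase i',
            ∑ σ : Perm α, f (σ i') (σ j') = ∑ σ : Perm α, f (σ i) (σ j) :=
          fun i' j' hj' => sum_comp_apply_apply_eq f (ne_of_mem_erase hj').symm hij
        simp [sum_congr rfl (h _), card_erase_of_mem, mul_smul]
    _ = ∑ σ : Perm α, ∑ i', ∑ j' ∈ univ.erase i', f (σ i') (σ j') := by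
        rw [sum_comm]; exact sum_congr rfl fun _ _ => sum_comm
    _ = (Fintype.card α)! • ∑ k, ∑ l ∈ univ.erase k, f k l := by
        simp [sum_sum_erase_comp_apply_apply, Fintype.card_perm]

variable {K : Type*} [Field K] [CharZero K]

theorem factorial_inv_mul_sum_comp_apply (f : α → K) (i : α) :
    ((Fintype.card α)! : K)⁻¹ * ∑ σ : Perm α, f (σ i) = (Fintype.card α : K)⁻¹ * ∑ k, f k := by
  have hcount := card_smul_sum_comp_apply f i
  have hcard : (Fintype.card α : K) ≠ 0 := by exact_mod_cast (Fintype.card_pos_iff.mpr ⟨i⟩).ne'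
  have hfac : ((Fintype.card α)! : K) ≠ 0 := by exact_mod_cast factorial_ne_zero _
  simp only [nsmul_eq_mul] at hcount
  field_simp
  linear_combination hcount

theorem factorial_inv_mul_sum_comp_apply_apply (f : α → α → K) {i j : α} (hij : i ≠ j) :
    ((Fintype.card α)! : K)⁻¹ * ∑ σ : Perm α, f (σ i) (σ j) =
      ((Fintype.card α : K) * ((Fintype.card α : K) - 1))⁻¹ *
        ∑ k, ∑ l ∈ univ.erase k, f k l := by
  have hcount := card_mul_pred_smul_sum_comp_apply_apply f hij
  have hcard : 1 < Fintype.card α := Fintype.one_lt_card_iff.mpr ⟨i, j, hij⟩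
  have hcard₀ : (Fintype.card α : K) ≠ 0 := by exact_mod_cast (zero_lt_one.trans hcard).ne'
  have hfac : ((Fintype.card α)! : K) ≠ 0 := by exact_mod_cast factorial_ne_zero _
  have hcard₁ : (Fintype.card α : K) - 1 ≠ 0 := sub_ne_zero.mpr (by exact_mod_cast hcard.ne')
  simp only [nsmul_eq_mul, Nat.cast_mul, Nat.cast_pred hcard.le] at hcount
  field_simp
  linear_combination hcount

end Equiv.Perm

theorem Complex.sum_sum_erase_mul_conj {ι : Type*} [Fintype ι] [DecidableEq ι] (z : ι → ℂ) :
    ∑ k, ∑ l ∈ univ.erase k, z k * conj (z l) =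
      ((normSq (∑ k, z k) - ∑ k, normSq (z k) : ℝ) : ℂ) := by
  simp_rw [sum_erase_eq_sub (mem_univ _), ← mul_sum, sum_sub_distrib, ← sum_mul, ← map_sum]
  push_cast [← mul_conj]
  rfl

theorem random_permutation_density_matrix_general
    {N : ℕ} (α : Fin N → ℂ)
    (hα : ∑ i : Fin N, ‖α i‖ ^ 2 = 1)
    (ρ : Matrix (Fin N) (Fin N) ℂ)
    (hρ : ρ = ((N.factorial : ℂ))⁻¹ • ∑ σ : Equiv.Perm (Fin N),
      Matrix.of (fun i j : Fin N => α (σ⁻¹ i) * (starRingEnd ℂ) (α (σ⁻¹ j)))) :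
    (∀ i : Fin N, ρ i i = (N : ℂ)⁻¹) ∧
    (∀ i j : Fin N, i ≠ j →
      ρ i j = ((N : ℂ) * ((N : ℂ) - 1))⁻¹ *
        ∑ k : Fin N, ∑ l ∈ Finset.univ.erase k, α k * (starRingEnd ℂ) (α l)) ∧
    (∃ a : ℝ, ∀ i j : Fin N, i ≠ j → ρ i j = (a : ℂ)) := by
  have hentry (i j : Fin N) :
      ρ i j = (N ! : ℂ)⁻¹ * ∑ σ : Perm (Fin N), α (σ i) * conj (α (σ j)) := by
    rw [hρ, ← Equiv.sum_comp (Equiv.inv (Perm (Fin N)))]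
    simp [Matrix.sum_apply]
  have hoff (i j : Fin N) (hij : i ≠ j) :
      ρ i j = ((N : ℂ) * ((N : ℂ) - 1))⁻¹ *
        ∑ k : Fin N, ∑ l ∈ Finset.univ.erase k, α k * conj (α l) := by
    simpa only [Fintype.card_fin, ← hentry] using
      Perm.factorial_inv_mul_sum_comp_apply_apply (fun k l => α k * conj (α l)) hij
  have hnorm : ∑ k, α k * conj (α k) = 1 := by
    simp_rw [Complex.mul_conj, Complex.normSq_eq_norm_sq]
    exact_mod_cast hα
  refine ⟨fun i => ?_, hoff, ?_⟩
  · simpa only [Fintype.card_fin, ← hentry, hnorm, mul_one] using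
      Perm.factorial_inv_mul_sum_comp_apply (fun k => α k * conj (α k)) i
  · refine ⟨((N : ℝ) * ((N : ℝ) - 1))⁻¹ *
      (Complex.normSq (∑ k, α k) - ∑ k, Complex.normSq (α k)), fun i j hij => ?_⟩
    rw [hoff i j hij, Complex.sum_sum_erase_mul_conj]
    push_cast
    rfl

/-- The permutation-averaged matrix ρ = (1/N!)·Σ_σ v_σ v_σ*, with
(v_σ)_i = α_{σ⁻¹(i)} and Σ_i |α_i|² = 1, has all diagonal entries 1/N and all
off-diagonal entries equal to (1/(N(N−1)))·Σ_{k≠l} α_k·conj(α_l), which is a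
common real number a. -/
theorem random_permutation_density_matrix
    {N : ℕ} (hN : 2 ≤ N) (α : Fin N → ℂ)
    (hα : ∑ i : Fin N, ‖α i‖ ^ 2 = 1)
    (ρ : Matrix (Fin N) (Fin N) ℂ)
    (hρ : ρ = ((N.factorial : ℂ))⁻¹ • ∑ σ : Equiv.Perm (Fin N),
      Matrix.of (fun i j : Fin N => α (σ⁻¹ i) * (starRingEnd ℂ) (α (σ⁻¹ j)))) :
    (∀ i : Fin N, ρ i i = (N : ℂ)⁻¹) ∧
    (∀ i j : Fin N, i ≠ j →
      ρ i j = ((N : ℂ) * ((N : ℂ) - 1))⁻¹ *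
        ∑ k : Fin N, ∑ l ∈ Finset.univ.erase k, α k * (starRingEnd ℂ) (α l)) ∧
    (∃ a : ℝ, ∀ i j : Fin N, i ≠ j → ρ i j = (a : ℂ)) :=
  random_permutation_density_matrix_general α hα ρ hρ
end

section
/- Let X, Y, G, H be finite sets with |X| = N, |Y| = K, |G| = L, |H| = W, where N ≥ 2, and let (g_y, h_y)_{y∈Y} be a scrambling permutation pair with parameters (N, K, W, L). Let α : X → ℂ satisfy Σ_{x∈X} |α_x|² = 1, and let ε be a real number with |Σ_{x∈X} α_x|² = N·(1 − ε). Then (1/(K·L)) · Σ_{y∈Y} Σ_{u∈H} |Σ_{x : h_y(x) = u} α_x|² = 1 − ε·N·(L−1)/(L·(N−1)). -/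
/-!
Expanding each squared norm, the success sum becomes `∑ x₁ x₂, c x₁ x₂ * Re (α x₁ * conj (α x₂))`,
where `c x₁ x₂` counts the `y` with `h y x₁ = h y x₂`. Since `c` is `K` on the diagonal and `p K`
off it, the sum is `K (1 - p) + p K N (1 - ε)`. Every fibre of `h y` has `L` elements (it is in
bijection with `G`), so counting colliding pairs in two ways gives `p (N - 1) = L - 1`.
-/

open Finset ComplexConjugate Function

theorem Complex.sq_norm_sum_eq_sum_sum_re {ι : Type*} (s : Finset ι) (α : ι → ℂ) :
    ‖∑ i ∈ s, α i‖ ^ 2 = ∑ i ∈ s, ∑ j ∈ s, (α i * conj (α j)).re := by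
  rw [← Complex.normSq_eq_norm_sq, ← Complex.ofReal_re (Complex.normSq _), ← Complex.mul_conj,
    map_sum, sum_mul_sum, Complex.re_sum]
  simp_rw [Complex.re_sum]

theorem sum_sum_mul_eq_of_offDiag_const_s15 {X R : Type*} [Fintype X] [CommRing R]
    (c w : X → X → R) {a b : R} (hdiag : ∀ x, c x x = a)
    (hoff : ∀ x₁ x₂, x₁ ≠ x₂ → c x₁ x₂ = b) :
    ∑ x₁, ∑ x₂, c x₁ x₂ * w x₁ x₂ = (a - b) * ∑ x, w x x + b * ∑ x₁, ∑ x₂, w x₁ x₂ := by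
  classical
  have row : ∀ x₁, ∑ x₂, c x₁ x₂ * w x₁ x₂ = (a - b) * w x₁ x₁ + b * ∑ x₂, w x₁ x₂ := by
    intro x₁
    rw [← add_sum_erase _ _ (mem_univ x₁), ← add_sum_erase _ (w x₁) (mem_univ x₁), hdiag,
      mul_add, mul_sum, sum_congr rfl fun x₂ hx₂ => by rw [hoff x₁ x₂ (ne_of_mem_erase hx₂).symm]]
    ring
  simp only [row, sum_add_distrib, ← mul_sum]

theorem card_fiber_eq_card_of_bijective_prod {X G H : Type*} [Fintype X] [Fintype G]
    [DecidableEq H] (g : X → G) (h : X → H) (hbij : Bijective fun x => (g x, h x)) (u : H) :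
    #{x | h x = u} = Fintype.card G := by
  set e := Equiv.ofBijective _ hbij
  have he : ∀ x, e x = (g x, h x) := fun _ => rfl
  rw [← card_univ]
  refine card_nbij' g (fun a => e.symm (a, u)) (fun _ _ => mem_univ _) (fun a _ => ?_)
    (fun x hx => ?_) (fun a _ => ?_)
  · simpa [he] using congrArg Prod.snd (e.apply_symm_apply (a, u))
  · rw [mem_coe, mem_filter] at hx
    rw [← hx.2]
    exact e.symm_apply_apply x
  · simpa [he] using congrArg Prod.fst (e.apply_symm_apply (a, u))

section Collisions

variable {X Y H : Type*} [DecidableEq H] [Fintype Y]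

def collisionCount (h : Y → X → H) (x₁ x₂ : X) : ℕ := #{y | h y x₁ = h y x₂}

@[simp]
theorem collisionCount_self (h : Y → X → H) (x : X) : collisionCount h x x = Fintype.card Y := by
  simp [collisionCount]

variable [Fintype X]

theorem sum_sq_norm_sum_fiber [Fintype H] (f : X → H) (α : X → ℂ) :
    ∑ u, ‖∑ x with f x = u, α x‖ ^ 2
      = ∑ x₁, ∑ x₂ with f x₂ = f x₁, (α x₁ * conj (α x₂)).re := by
  simp_rw [Complex.sq_norm_sum_eq_sum_sum_re]
  rw [← sum_fiberwise univ f]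
  refine sum_congr rfl fun u _ => sum_congr rfl fun x₁ hx₁ => ?_
  rw [(mem_filter.1 hx₁).2]

theorem sum_sum_fiber_eq_sum_sum_collisionCount_nsmul {M : Type*} [AddCommMonoid M]
    (h : Y → X → H) (w : X → X → M) :
    ∑ y, ∑ x₁, ∑ x₂ with h y x₂ = h y x₁, w x₁ x₂
      = ∑ x₁, ∑ x₂, collisionCount h x₁ x₂ • w x₁ x₂ := by
  simp_rw [collisionCount, ← sum_const, sum_filter]
  rw [sum_comm]
  refine sum_congr rfl fun x₁ _ => ?_
  rw [sum_comm]
  simp_rw [eq_comm]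

theorem sum_sum_collisionCount_of_card_fiber (h : Y → X → H) {L : ℕ}
    (hfib : ∀ y u, #{x | h y x = u} = L) :
    ∑ x₁, ∑ x₂, collisionCount h x₁ x₂ = Fintype.card Y * Fintype.card X * L := by
  have := sum_sum_fiber_eq_sum_sum_collisionCount_nsmul h fun _ _ => 1
  simp only [smul_eq_mul, mul_one, sum_const, hfib, card_univ] at this
  rw [← this]
  ring

theorem collisionCount_offDiag_mul_card_sub_one [Nonempty X] (h : Y → X → H) {L : ℕ}
    (hfib : ∀ y u, #{x | h y x = u} = L) {q : ℝ}
    (hoff : ∀ x₁ x₂, x₁ ≠ x₂ → (collisionCount h x₁ x₂ : ℝ) = q) :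
    q * (Fintype.card X - 1) = Fintype.card Y * (L - 1) := by
  have hdiag : ∀ x, (collisionCount h x x : ℝ) = Fintype.card Y := by simp
  have hcount := sum_sum_mul_eq_of_offDiag_const_s15 _ (fun _ _ => 1) hdiag hoff
  have htotal : ∑ x₁, ∑ x₂, (collisionCount h x₁ x₂ : ℝ) = Fintype.card Y * Fintype.card X * L := by
    exact_mod_cast sum_sum_collisionCount_of_card_fiber h hfib
  simp only [mul_one, sum_const, card_univ, nsmul_eq_mul, htotal] at hcount
  apply mul_left_cancel₀ (Nat.cast_ne_zero.2 (Fintype.card_ne_zero (α := X)))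
  linear_combination -hcount

end Collisions

theorem simple_scrambling_success_probability_general
    {X Y G H : Type*} [Fintype X] [Fintype Y] [Nonempty Y] [Fintype G] [Fintype H]
    [DecidableEq H]
    {N K L : ℕ}
    (hX : Fintype.card X = N) (hY : Fintype.card Y = K)
    (hG : Fintype.card G = L)
    (hN : 2 ≤ N)
    (g : Y → X → G) (h : Y → X → H)
    (hbij : ∀ y : Y, Function.Bijective (fun x : X => (g y x, h y x)))
    (hcol : ∃ p : ℝ, ∀ x₁ x₂ : X, x₁ ≠ x₂ →
      ((Finset.univ.filter (fun y : Y => h y x₁ = h y x₂)).card : ℝ) = p * K)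
    (α : X → ℂ) (hα : ∑ x : X, ‖α x‖ ^ 2 = 1)
    (ε : ℝ) (hfid : ‖∑ x : X, α x‖ ^ 2 = N * (1 - ε)) :
    (1 / ((K : ℝ) * L)) *
        ∑ y : Y, ∑ u : H,
          ‖∑ x ∈ Finset.univ.filter (fun x : X => h y x = u), α x‖ ^ 2
      = 1 - ε * N * ((L : ℝ) - 1) / (L * ((N : ℝ) - 1)) := by
  obtain ⟨p, hoff⟩ := hcol
  change ∀ x₁ x₂, x₁ ≠ x₂ → (collisionCount h x₁ x₂ : ℝ) = p * K at hoff
  have : Nonempty X := Fintype.card_pos_iff.1 (by omega)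
  have hfib : ∀ y u, #{x | h y x = u} = L := fun y u =>
    hG ▸ card_fiber_eq_card_of_bijective_prod (g y) (h y) (hbij y) u
  have hdiag : ∀ x, (collisionCount h x x : ℝ) = K := by simp [hY]
  have hK : (K : ℝ) ≠ 0 := by rw [← hY]; exact_mod_cast Fintype.card_ne_zero
  have hL : (L : ℝ) ≠ 0 := by
    obtain ⟨x₀⟩ := ‹Nonempty X›
    obtain ⟨y₀⟩ := ‹Nonempty Y›
    rw [← hfib y₀ (h y₀ x₀)]
    exact Nat.cast_ne_zero.2 (card_ne_zero_of_mem (a := x₀) (by simp))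
  have hN1 : (N : ℝ) - 1 ≠ 0 := by
    have : (2 : ℝ) ≤ N := by exact_mod_cast hN
    linarith
  have hp : p * (N - 1) = L - 1 := by
    have := collisionCount_offDiag_mul_card_sub_one h hfib hoff
    rw [hX, hY] at this
    exact mul_left_cancel₀ hK (by linear_combination this)
  have hsum : ∑ y, ∑ u, ‖∑ x with h y x = u, α x‖ ^ 2 = (K - p * K) + p * K * (N * (1 - ε)) := by
    simp_rw [sum_sq_norm_sum_fiber, sum_sum_fiber_eq_sum_sum_collisionCount_nsmul, nsmul_eq_mul]
    rw [sum_sum_mul_eq_of_offDiag_const_s15 _ _ hdiag hoff, ← Complex.sq_norm_sum_eq_sum_sum_re, hfid]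
    simp_rw [Complex.mul_conj, Complex.ofReal_re, Complex.normSq_eq_norm_sq, hα, mul_one]
  rw [hsum]
  field_simp
  linear_combination (N - 1 - N * ε) * hp

/-- For a scrambling permutation pair (g_y, h_y) with parameters
(N, K, W, L) (N ≥ 2, Y nonempty so the collision probability is well defined) and
a coefficient vector α with Σ_x |α_x|² = 1 and |Σ_x α_x|² = N(1 − ε), the success
probability of the Simple Scrambling protocol is
(1/(KL))·Σ_y Σ_u |Σ_{x : h_y(x)=u} α_x|² = 1 − ε·N(L−1)/(L(N−1)). -/
theorem simple_scrambling_success_probability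
    {X Y G H : Type*} [Fintype X] [Fintype Y] [Nonempty Y] [Fintype G] [Fintype H]
    [DecidableEq H]
    {N K L W : ℕ}
    (hX : Fintype.card X = N) (hY : Fintype.card Y = K)
    (hG : Fintype.card G = L) (hH : Fintype.card H = W)
    (hN : 2 ≤ N)
    (g : Y → X → G) (h : Y → X → H)
    (hbij : ∀ y : Y, Function.Bijective (fun x : X => (g y x, h y x)))
    (hcol : ∃ p : ℝ, ∀ x₁ x₂ : X, x₁ ≠ x₂ →
      ((Finset.univ.filter (fun y : Y => h y x₁ = h y x₂)).card : ℝ) = p * K)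
    (α : X → ℂ) (hα : ∑ x : X, ‖α x‖ ^ 2 = 1)
    (ε : ℝ) (hfid : ‖∑ x : X, α x‖ ^ 2 = N * (1 - ε)) :
    (1 / ((K : ℝ) * L)) *
        ∑ y : Y, ∑ u : H,
          ‖∑ x ∈ Finset.univ.filter (fun x : X => h y x = u), α x‖ ^ 2
      = 1 - ε * N * ((L : ℝ) - 1) / (L * ((N : ℝ) - 1)) :=
  simple_scrambling_success_probability_general hX hY hG hN g h hbij hcol α hα ε hfid
end
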